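/- If D ⊆ ω^ω × ω^ω is a Gδ set (in particular, any closed set) and A × B ⊆ D for some uncountable sets A, B ⊆ ω^ω, then D contains a perfect rectangle P₁ × P₂ with P₁, P₂ ⊆ ω^ω nonempty perfect sets. -/

import Mathlib

/-!
Discarding the countably many points of `A` and of `B` that are not condensation points leaves
nonempty sets `A₁ ⊆ A`, `B₁ ⊆ B` without isolated points. Write `D = ⋂ Uₙ` with `Uₙ` open and run
two Cantor schemes of closed balls side by side, centred at points of `A₁` and of `B₁`: at level `n`
each ball splits into two disjoint smaller balls around distinct nearby points, and the common
radius is taken so small that the product of any `A₁`-ball with any `B₁`-ball of that level lies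
in `Uₙ`. This is possible because each of the finitely many pairs of centres lies in
`A₁ × B₁ ⊆ Uₙ`. The two schemes induce continuous injections of Cantor space, whose ranges are
perfect and span a rectangle lying in every `Uₙ`.
-/

open Cardinal

open Set Filter Function Metric PiNat CantorScheme Topology

namespace Sh522

section Condensation

variable {X : Type*} [TopologicalSpace X] [SecondCountableTopology X]

theorem countable_setOf_countable_nhds_inter (A : Set X) :
    {x ∈ A | ∃ V ∈ 𝓝 x, (V ∩ A).Countable}.Countable := by
  choose! V hV hVA using fun x (hx : x ∈ {x ∈ A | ∃ V ∈ 𝓝 x, (V ∩ A).Countable}) => hx.2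
  obtain ⟨t, htc, htN, hNt⟩ := (HereditarilyLindelofSpace.isLindelof _).elim_nhds_subcover V hV
  refine (htc.biUnion fun x hx => hVA x (htN x hx)).mono fun y hy => ?_
  obtain ⟨x, hx, hyx⟩ := mem_iUnion₂.1 (hNt hy)
  exact mem_biUnion hx ⟨hyx, hy.1⟩

theorem exists_preperfect_subset_of_not_countable {A : Set X} (hA : ¬A.Countable) :
    ∃ A₁ ⊆ A, Preperfect A₁ ∧ A₁.Nonempty := by
  set N := {x ∈ A | ∃ V ∈ 𝓝 x, (V ∩ A).Countable}
  have hN : N.Countable := countable_setOf_countable_nhds_inter A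
  have hcover : ∀ V, V ∩ A ⊆ V ∩ (A \ N) ∪ N := fun V x hx => by
    by_cases hxN : x ∈ N
    · exact Or.inr hxN
    · exact Or.inl ⟨hx.1, hx.2, hxN⟩
  refine ⟨A \ N, sdiff_subset, preperfect_iff_nhds.2 fun x hx V hV => ?_, ?_⟩
  · by_contra! h
    refine hx.2 ⟨hx.1, V, hV, ((countable_singleton x).union hN).mono ((hcover V).trans ?_)⟩
    exact union_subset_union_left _ h
  · refine nonempty_iff_ne_empty.2 fun h => hA (hN.mono ?_)
    simpa [h] using hcover univ

end Condensation

theorem tendsto_update_atTop_nhds {α : Type*} [TopologicalSpace α] (x a : ℕ → α) :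
    Tendsto (fun n => update x n (a n)) atTop (𝓝 x) :=
  tendsto_pi_nhds.2 fun i => tendsto_const_nhds.congr' <|
    (eventually_gt_atTop i).mono fun _ hn => (update_of_ne hn.ne _ _).symm

theorem perfect_range_of_continuous_injective {Z : Type*} [TopologicalSpace Z] [T2Space Z]
    {f : (ℕ → Bool) → Z} (hf : Continuous f) (hinj : Injective f) : Perfect (range f) := by
  refine ⟨(isCompact_range hf).isClosed, preperfect_iff_nhds.2 ?_⟩
  rintro _ ⟨x, rfl⟩ V hV
  obtain ⟨n, hn⟩ :=
    (((hf.tendsto x).comp (tendsto_update_atTop_nhds x fun n => !x n)).eventually hV).exists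
  exact ⟨_, ⟨hn, mem_range_self _⟩, hinj.ne fun h => by simpa using congrFun h n⟩

section Splitting

variable {X : Type*} [MetricSpace X]

def SplitsInto (c : List Bool → X) (r : ℝ) (c' : List Bool → X) (r' : ℝ) (l : List Bool) :
    Prop :=
  (∀ i, closedBall (c' (i :: l)) r' ⊆ closedBall (c l) r) ∧
    Disjoint (closedBall (c' (true :: l)) r') (closedBall (c' (false :: l)) r')

theorem Preperfect.exists_distinct_children {A : Set X} (hA : Preperfect A) {c : List Bool → X}
    (hc : ∀ l, c l ∈ A) {r : ℝ} (hr : 0 < r) :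
    ∃ c' : List Bool → X, (∀ l, c' l ∈ A) ∧ (∀ l i, c' (i :: l) ∈ ball (c l) r) ∧
      ∀ l, c' (true :: l) ≠ c' (false :: l) := by
  choose d hd hdc using fun l =>
    preperfect_iff_nhds.1 hA (c l) (hc l) (ball (c l) r) (ball_mem_nhds _ hr)
  refine ⟨fun | [] => c [] | i :: l => cond i (d l) (c l), ?_, ?_, fun l => hdc l⟩
  · rintro (_ | ⟨(_ | _), l⟩)
    exacts [hc [], hc l, (hd l).2]
  · rintro l (_ | _)
    exacts [mem_ball_self hr, (hd l).1]

theorem eventually_splitsInto {c c' : List Bool → X} {r : ℝ} {l : List Bool}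
    (hball : ∀ i, c' (i :: l) ∈ ball (c l) r) (hne : c' (true :: l) ≠ c' (false :: l)) :
    ∀ᶠ r' in 𝓝 0, SplitsInto c r c' r' l := by
  have hsub : ∀ᶠ r' in 𝓝 0, ∀ i, closedBall (c' (i :: l)) r' ⊆ closedBall (c l) r :=
    eventually_all.2 fun i => (eventually_closedBall_subset (isOpen_ball.mem_nhds (hball i))).mono
      fun _ h => h.trans ball_subset_closedBall
  have hsmall : ∀ᶠ r' in 𝓝 (0 : ℝ), r' + r' < dist (c' (true :: l)) (c' (false :: l)) :=
    ((continuous_id.add continuous_id).tendsto' 0 0 (add_zero 0)).eventually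
      (gt_mem_nhds (dist_pos.2 hne))
  exact hsub.and (hsmall.mono fun _ h => closedBall_disjoint_closedBall h)

theorem ediam_closedBall_le (x : X) (r : ℝ) : ediam (closedBall x r) ≤ ENNReal.ofReal (2 * r) :=
  ediam_le_of_forall_dist_le fun y hy z hz => (dist_triangle_right y z x).trans <| by
    linarith [mem_closedBall.1 hy, mem_closedBall.1 hz]

theorem exists_continuous_injective_of_splitsInto [CompleteSpace X] {c : ℕ → List Bool → X}
    {ρ : ℕ → ℝ} (hρ_nonneg : ∀ n, 0 ≤ ρ n) (hρ : Tendsto ρ atTop (𝓝 0))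
    (hsplit : ∀ n l, l.length = n → SplitsInto (c n) (ρ n) (c (n + 1)) (ρ (n + 1)) l) :
    ∃ f : (ℕ → Bool) → X, Continuous f ∧ Injective f ∧
      ∀ x n, f x ∈ closedBall (c n (res x n)) (ρ n) := by
  set T : List Bool → Set X := fun l => closedBall (c l.length l) (ρ l.length)
  have hT : ∀ x n, T (res x n) = closedBall (c n (res x n)) (ρ n) := by
    intro x n
    simp only [T, res_length]
  have hanti : ClosureAntitone T :=
    Antitone.closureAntitone (fun l i => (hsplit _ l rfl).1 i) fun _ => isClosed_closedBall
  have hdisj : CantorScheme.Disjoint T := by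
    rintro l (_ | _) (_ | _) hij
    exacts [absurd rfl hij, (hsplit _ l rfl).2.symm, (hsplit _ l rfl).2, absurd rfl hij]
  have hdiam : VanishingDiam T := by
    intro x
    have h2ρ : Tendsto (fun n => ENNReal.ofReal (2 * ρ n)) atTop (𝓝 0) := by
      simpa using ENNReal.tendsto_ofReal (hρ.const_mul 2)
    refine tendsto_of_tendsto_of_tendsto_of_le_of_le tendsto_const_nhds h2ρ (fun _ => zero_le)
      fun n => ?_
    exact (hT x n).symm ▸ ediam_closedBall_le _ _
  have hdom : (inducedMap T).1 = Set.univ :=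
    hanti.map_of_vanishingDiam hdiam fun _ => nonempty_closedBall.2 (hρ_nonneg _)
  refine ⟨fun x => (inducedMap T).2 ⟨x, hdom ▸ mem_univ x⟩, hdiam.map_continuous.comp (by fun_prop),
    fun x y hxy => congrArg Subtype.val (hdisj.map_injective hxy), fun x n => ?_⟩
  exact hT x n ▸ map_mem _ n

end Splitting

section Fusion

variable {X Y : Type*} [MetricSpace X] [MetricSpace Y] {A : Set X} {B : Set Y}
  {U : ℕ → Set (X × Y)}

theorem eventually_closedBall_prod_subset {W : Set (X × Y)} (hW : IsOpen W) (hAB : A ×ˢ B ⊆ W)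
    {a : List Bool → X} (ha : ∀ l, a l ∈ A) {b : List Bool → Y} (hb : ∀ l, b l ∈ B) (n : ℕ) :
    ∀ᶠ ρ in 𝓝 0, ∀ s ∈ {l : List Bool | l.length = n}, ∀ t ∈ {l : List Bool | l.length = n},
      closedBall (a s) ρ ×ˢ closedBall (b t) ρ ⊆ W := by
  refine (eventually_all_finite (List.finite_length_eq Bool n)).2 fun s _ =>
    (eventually_all_finite (List.finite_length_eq Bool n)).2 fun t _ => ?_
  simpa only [closedBall_prod_same] using
    eventually_closedBall_subset (hW.mem_nhds (hAB ⟨ha s, hb t⟩))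

theorem exists_pos_lt_one_div_of_eventually_nhds_zero {P : ℝ → Prop} (hP : ∀ᶠ ρ in 𝓝 0, P ρ)
    (n : ℕ) : ∃ ρ, P ρ ∧ 0 < ρ ∧ ρ < 1 / (n + 1 : ℝ) :=
  ((hP.filter_mono nhdsWithin_le_nhds).and (Ioo_mem_nhdsGT (by positivity))).exists

/-- Level `n` of the fusion construction; only the centres `a l`, `b l` with `l.length = n`
matter. -/
structure FusionStage (A : Set X) (B : Set Y) (U : ℕ → Set (X × Y)) (n : ℕ) where
  a : List Bool → X
  b : List Bool → Y
  r : ℝ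
  a_mem : ∀ l, a l ∈ A
  b_mem : ∀ l, b l ∈ B
  r_pos : 0 < r
  r_lt : r < 1 / (n + 1 : ℝ)
  prod_subset : ∀ s ∈ {l : List Bool | l.length = n}, ∀ t ∈ {l : List Bool | l.length = n},
    closedBall (a s) r ×ˢ closedBall (b t) r ⊆ U n

def FusionStage.Refines {n : ℕ} (S : FusionStage A B U n) (S' : FusionStage A B U (n + 1)) :
    Prop :=
  ∀ l : List Bool, l.length = n → SplitsInto S.a S.r S'.a S'.r l ∧ SplitsInto S.b S.r S'.b S'.r l

theorem FusionStage.nonempty (hU : ∀ n, IsOpen (U n)) (hAB : ∀ n, A ×ˢ B ⊆ U n)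
    (hA : A.Nonempty) (hB : B.Nonempty) : Nonempty (FusionStage A B U 0) := by
  obtain ⟨x, hx⟩ := hA
  obtain ⟨y, hy⟩ := hB
  obtain ⟨ρ, hρ, hρ_pos, hρ_lt⟩ := exists_pos_lt_one_div_of_eventually_nhds_zero
    (eventually_closedBall_prod_subset (hU 0) (hAB 0) (fun _ => hx) (fun _ => hy) 0) 0
  exact ⟨⟨fun _ => x, fun _ => y, ρ, fun _ => hx, fun _ => hy, hρ_pos, hρ_lt, hρ⟩⟩

theorem FusionStage.exists_refines (hU : ∀ n, IsOpen (U n)) (hAB : ∀ n, A ×ˢ B ⊆ U n)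
    (hA : Preperfect A) (hB : Preperfect B) {n : ℕ} (S : FusionStage A B U n) :
    ∃ S' : FusionStage A B U (n + 1), S.Refines S' := by
  obtain ⟨a, ha, ha_ball, ha_ne⟩ := Preperfect.exists_distinct_children hA S.a_mem S.r_pos
  obtain ⟨b, hb, hb_ball, hb_ne⟩ := Preperfect.exists_distinct_children hB S.b_mem S.r_pos
  have hsplit : ∀ᶠ ρ in 𝓝 0, ∀ l ∈ {l : List Bool | l.length = n},
      SplitsInto S.a S.r a ρ l ∧ SplitsInto S.b S.r b ρ l :=
    (eventually_all_finite (List.finite_length_eq Bool n)).2 fun l _ =>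
      (eventually_splitsInto (ha_ball l) (ha_ne l)).and
        (eventually_splitsInto (hb_ball l) (hb_ne l))
  obtain ⟨ρ, ⟨hρ_prod, hρ_split⟩, hρ_pos, hρ_lt⟩ := exists_pos_lt_one_div_of_eventually_nhds_zero
    ((eventually_closedBall_prod_subset (hU _) (hAB _) ha hb (n + 1)).and hsplit) (n + 1)
  exact ⟨⟨a, b, ρ, ha, hb, hρ_pos, hρ_lt, hρ_prod⟩, hρ_split⟩

theorem exists_perfect_prod_subset_iInter [CompleteSpace X] [CompleteSpace Y]
    (hA : Preperfect A) (hA₀ : A.Nonempty) (hB : Preperfect B) (hB₀ : B.Nonempty)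
    (hU : ∀ n, IsOpen (U n)) (hAB : ∀ n, A ×ˢ B ⊆ U n) :
    ∃ P₁ P₂, Perfect P₁ ∧ P₁.Nonempty ∧ Perfect P₂ ∧ P₂.Nonempty ∧ P₁ ×ˢ P₂ ⊆ ⋂ n, U n := by
  obtain ⟨S₀⟩ := FusionStage.nonempty hU hAB hA₀ hB₀
  choose next h_next using fun n (S : FusionStage A B U n) => S.exists_refines hU hAB hA hB
  let S : ∀ n, FusionStage A B U n := fun n => Nat.rec S₀ next n
  have hr_nonneg : ∀ n, 0 ≤ (S n).r := fun n => (S n).r_pos.le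
  have hr : Tendsto (fun n => (S n).r) atTop (𝓝 0) :=
    squeeze_zero hr_nonneg (fun n => (S n).r_lt.le) tendsto_one_div_add_atTop_nhds_zero_nat
  obtain ⟨f, hf_cont, hf_inj, hf_mem⟩ := exists_continuous_injective_of_splitsInto
    (c := fun n => (S n).a) hr_nonneg hr fun n l hl => (h_next n (S n) l hl).1
  obtain ⟨g, hg_cont, hg_inj, hg_mem⟩ := exists_continuous_injective_of_splitsInto
    (c := fun n => (S n).b) hr_nonneg hr fun n l hl => (h_next n (S n) l hl).2
  refine ⟨range f, range g, perfect_range_of_continuous_injective hf_cont hf_inj,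
    range_nonempty f, perfect_range_of_continuous_injective hg_cont hg_inj, range_nonempty g, ?_⟩
  rintro ⟨_, _⟩ ⟨⟨x, rfl⟩, ⟨y, rfl⟩⟩
  exact mem_iInter.2 fun n =>
    (S n).prod_subset _ (res_length x n) _ (res_length y n) ⟨hf_mem x n, hg_mem y n⟩

end Fusion

theorem exists_perfect_prod_subset_of_isGδ {X Y : Type*} [TopologicalSpace X] [PolishSpace X]
    [TopologicalSpace Y] [PolishSpace Y] {D : Set (X × Y)} (hD : IsGδ D) {A : Set X} {B : Set Y}
    (hA : ¬A.Countable) (hB : ¬B.Countable) (hAB : A ×ˢ B ⊆ D) :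
    ∃ P₁ P₂, Perfect P₁ ∧ P₁.Nonempty ∧ Perfect P₂ ∧ P₂.Nonempty ∧ P₁ ×ˢ P₂ ⊆ D := by
  let := TopologicalSpace.upgradeIsCompletelyMetrizable X
  let := TopologicalSpace.upgradeIsCompletelyMetrizable Y
  obtain ⟨U, hU, rfl⟩ := isGδ_iff_eq_iInter_nat.1 hD
  obtain ⟨A₁, hA₁A, hA₁, hA₁₀⟩ := exists_preperfect_subset_of_not_countable hA
  obtain ⟨B₁, hB₁B, hB₁, hB₁₀⟩ := exists_preperfect_subset_of_not_countable hB
  exact exists_perfect_prod_subset_iInter hA₁ hA₁₀ hB₁ hB₁₀ hU fun n =>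
    (prod_mono hA₁A hB₁B).trans (hAB.trans (iInter_subset _ n))

/-- a Gδ subset of Baire space squared containing a rectangle with
both sides uncountable contains a perfect rectangle. -/
theorem stmt_18 (D : Set ((ℕ → ℕ) × (ℕ → ℕ))) (hD : IsGδ D)
    (A B : Set (ℕ → ℕ)) (hA : ℵ₀ < Cardinal.mk A) (hB : ℵ₀ < Cardinal.mk B)
    (hAB : A ×ˢ B ⊆ D) :
    ∃ P₁ P₂ : Set (ℕ → ℕ),
      Perfect P₁ ∧ P₁.Nonempty ∧ Perfect P₂ ∧ P₂.Nonempty ∧ P₁ ×ˢ P₂ ⊆ D :=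
  exists_perfect_prod_subset_of_isGδ hD
    (fun h => hA.not_ge (le_aleph0_iff_set_countable.2 h))
    (fun h => hB.not_ge (le_aleph0_iff_set_countable.2 h)) hAB

end Sh522
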